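/- arXiv:2402.00673 — 11 statements merged into one kernel-verified Lean document; each statement's English description precedes it below -/
import Mathlib

section
/- If A and B are n×n complex matrices such that the pencil A + λB is singular (i.e., det(A + λB) = 0 for every λ ∈ ℂ), then there exists a nonzero vector x ∈ ℂⁿ with x* A x = 0 and x* B x = 0; that is, (0,0) belongs to the joint numerical range W(A,B). -/
/-!
Since `det (A + λB)` vanishes identically, `A + λB` has a nonzero kernel vector
`p(λ) = ∑ xₖ λᵏ` over `ℂ[λ]`. Comparing coefficients gives `A x₀ = 0` and `A xₖ₊₁ = -B xₖ`, so
`U = span {xₖ}` satisfies `AU ⊆ BU`, and the top coefficient `x_d` is a nonzero vector of `U`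
killed by `B`. Hence `dim (AU + BU) < dim U`, and any nonzero `x ∈ U` orthogonal to `AU + BU`
has `x*Ax = x*Bx = 0`.
-/

open Matrix Polynomial Module

section CoeffVec

variable {R m n : Type*}

def coeffVec [Semiring R] (p : n → R[X]) (k : ℕ) : n → R := fun j => (p j).coeff k

lemma exists_coeffVec_ne_zero_and_coeffVec_succ_eq_zero [Semiring R] [Fintype n] {p : n → R[X]}
    (hp : p ≠ 0) : ∃ d, coeffVec p d ≠ 0 ∧ coeffVec p (d + 1) = 0 := by
  classical
  obtain ⟨i, hi, hmax⟩ := Finset.exists_max_image {i | p i ≠ 0} (fun i => (p i).natDegree)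
    (by simpa [Finset.filter_nonempty_iff, Function.ne_iff] using hp)
  refine ⟨(p i).natDegree, fun h => ?_, funext fun j => ?_⟩
  · exact (Finset.mem_filter.mp hi).2 (leadingCoeff_eq_zero.mp (congrFun h i))
  · by_cases hj : p j = 0
    · simp [coeffVec, hj]
    · exact coeff_eq_zero_of_natDegree_lt (Nat.lt_succ_of_le (hmax j (by simpa using hj)))

variable [CommSemiring R] [Fintype n]

lemma coeffVec_map_C_mulVec (A : Matrix m n R) (p : n → R[X]) (k : ℕ) :
    coeffVec (A.map C *ᵥ p) k = A *ᵥ coeffVec p k := by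
  ext i
  simp [coeffVec, mulVec, dotProduct, coeff_C_mul]

lemma coeffVec_pencil_mulVec_zero (A B : Matrix m n R) (p : n → R[X]) :
    coeffVec ((A.map C + (X : R[X]) • B.map C) *ᵥ p) 0 = A *ᵥ coeffVec p 0 := by
  ext i
  simp [coeffVec, add_mulVec, smul_mulVec, ← coeffVec_map_C_mulVec]

lemma coeffVec_pencil_mulVec_succ (A B : Matrix m n R) (p : n → R[X]) (k : ℕ) :
    coeffVec ((A.map C + (X : R[X]) • B.map C) *ᵥ p) (k + 1) =
      A *ᵥ coeffVec p (k + 1) + B *ᵥ coeffVec p k := by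
  ext i
  simp [coeffVec, add_mulVec, smul_mulVec, ← coeffVec_map_C_mulVec]

end CoeffVec

lemma Matrix.det_map_C_add_X_smul_map_C_eq_zero {K n : Type*} [Field K] [Infinite K] [Fintype n]
    [DecidableEq n] (A B : Matrix n n K) (h : ∀ z : K, ¬IsUnit (A + z • B)) :
    (A.map C + (X : K[X]) • B.map C).det = 0 := by
  refine zero_of_eval_zero _ fun z => ?_
  have hz : (evalRingHom z).mapMatrix (A.map C + (X : K[X]) • B.map C) = A + z • B := by
    ext; simp [mul_comm _ z]
  rw [← coe_evalRingHom, RingHom.map_det, hz, ← not_ne_iff, ← isUnit_iff_ne_zero,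
    ← isUnit_iff_isUnit_det]
  exact h z

lemma Submodule.finrank_map_lt_of_mem_ker {K V W : Type*} [DivisionRing K] [AddCommGroup V]
    [Module K V] [AddCommGroup W] [Module K W] {U : Submodule K V} [FiniteDimensional K U]
    (f : V →ₗ[K] W) {x : V} (hxU : x ∈ U) (hx : x ≠ 0) (hfx : f x = 0) :
    finrank K (U.map f) < finrank K U := by
  have hker : LinearMap.ker (f ∘ₗ U.subtype) ≠ ⊥ := by
    rw [Submodule.ne_bot_iff]
    exact ⟨⟨x, hxU⟩, hfx, by simpa using hx⟩
  have := (f ∘ₗ U.subtype).finrank_range_add_finrank_ker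
  rw [LinearMap.range_comp, Submodule.range_subtype] at this
  have := Submodule.one_le_finrank_iff.mpr hker
  omega

theorem Matrix.exists_finrank_sup_map_lt_of_det_eq_zero {K n : Type*} [Field K] [Fintype n]
    [DecidableEq n] (A B : Matrix n n K) (h : (A.map C + (X : K[X]) • B.map C).det = 0) :
    ∃ U : Submodule K (n → K),
      finrank K ↥(U.map A.mulVecLin ⊔ U.map B.mulVecLin) < finrank K U := by
  obtain ⟨p, hp0, hp⟩ := exists_mulVec_eq_zero_iff.mpr h
  obtain ⟨d, hd, hd1⟩ := exists_coeffVec_ne_zero_and_coeffVec_succ_eq_zero hp0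
  set x := coeffVec p
  have hA0 : A *ᵥ x 0 = 0 := by
    rw [← coeffVec_pencil_mulVec_zero A B, hp]; rfl
  have hAsucc (k : ℕ) : A *ᵥ x (k + 1) = -(B *ᵥ x k) := by
    rw [eq_neg_iff_add_eq_zero, ← coeffVec_pencil_mulVec_succ, hp]; rfl
  have hBd : B *ᵥ x d = 0 := by
    rw [← neg_eq_zero, ← hAsucc, hd1, mulVec_zero]
  refine ⟨Submodule.span K (Set.range x), ?_⟩
  have hAB : (Submodule.span K (Set.range x)).map A.mulVecLin ≤
      (Submodule.span K (Set.range x)).map B.mulVecLin := by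
    rw [Submodule.map_span_le]
    rintro _ ⟨_ | k, rfl⟩
    · simp [hA0]
    · rw [mulVecLin_apply, hAsucc]
      exact neg_mem (Submodule.mem_map_of_mem (Submodule.subset_span ⟨k, rfl⟩))
  rw [sup_eq_right.mpr hAB]
  exact Submodule.finrank_map_lt_of_mem_ker _ (Submodule.subset_span ⟨d, rfl⟩) hd hBd

section InnerProductSpace

variable {𝕜 E : Type*} [RCLike 𝕜] [NormedAddCommGroup E] [InnerProductSpace 𝕜 E]
  [FiniteDimensional 𝕜 E]

lemma Submodule.exists_mem_orthogonal_ne_zero_of_finrank_lt {U V : Submodule 𝕜 E}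
    (h : finrank 𝕜 V < finrank 𝕜 U) : ∃ x ∈ U, x ∈ Vᗮ ∧ x ≠ 0 := by
  obtain ⟨⟨x, hxU⟩, hx, hx0⟩ := Submodule.exists_mem_ne_zero_of_ne_bot
    (LinearMap.ker_ne_bot_of_finrank_lt
      (f := V.orthogonalProjectionOnto.toLinearMap ∘ₗ U.subtype) h)
  exact ⟨x, hxU, Submodule.orthogonalProjectionOnto_eq_zero_iff.mp hx, by simpa using hx0⟩

open Submodule in
theorem exists_ne_zero_inner_map_eq_zero_of_finrank_lt (S T : E →ₗ[𝕜] E) (U : Submodule 𝕜 E)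
    (h : finrank 𝕜 ↥(U.map S ⊔ U.map T) < finrank 𝕜 U) :
    ∃ x ≠ 0, inner 𝕜 x (S x) = 0 ∧ inner 𝕜 x (T x) = 0 := by
  obtain ⟨x, hxU, hxV, hx0⟩ := Submodule.exists_mem_orthogonal_ne_zero_of_finrank_lt h
  exact ⟨x, hx0,
    inner_left_of_mem_orthogonal (mem_sup_left (mem_map_of_mem hxU)) hxV,
    inner_left_of_mem_orthogonal (mem_sup_right (mem_map_of_mem hxU)) hxV⟩

end InnerProductSpace

theorem Matrix.exists_ne_zero_star_dotProduct_mulVec_eq_zero_of_finrank_lt {𝕜 n : Type*} [RCLike 𝕜]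
    [Fintype n] (A B : Matrix n n 𝕜) (U : Submodule 𝕜 (n → 𝕜))
    (h : finrank 𝕜 ↥(U.map A.mulVecLin ⊔ U.map B.mulVecLin) < finrank 𝕜 U) :
    ∃ x ≠ 0, star x ⬝ᵥ (A *ᵥ x) = 0 ∧ star x ⬝ᵥ (B *ᵥ x) = 0 := by
  let e : (n → 𝕜) ≃ₗ[𝕜] EuclideanSpace 𝕜 n := (WithLp.linearEquiv 2 𝕜 (n → 𝕜)).symm
  have hmap (M : Matrix n n 𝕜) :
      (U.map e.toLinearMap).map (e.conj M.mulVecLin) = (U.map M.mulVecLin).map e.toLinearMap := by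
    rw [← Submodule.map_comp, ← Submodule.map_comp]
    rfl
  obtain ⟨x, hx0, hA, hB⟩ := exists_ne_zero_inner_map_eq_zero_of_finrank_lt
    (e.conj A.mulVecLin) (e.conj B.mulVecLin) (U.map e.toLinearMap)
    (by rwa [hmap, hmap, ← Submodule.map_sup, e.finrank_map_eq, e.finrank_map_eq])
  refine ⟨WithLp.ofLp x, by simpa using hx0, ?_, ?_⟩
  · rw [dotProduct_comm]; exact hA
  · rw [dotProduct_comm]; exact hB

/-- If the pencil `A + λ B` of `n × n` complex matrices is singular (i.e. `A + λ₀ B`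
is non-invertible for every `λ₀ ∈ ℂ`), then `(0,0)` belongs to the joint numerical
range of `(A, B)`: there is a nonzero vector `x` with `x* A x = 0` and `x* B x = 0`. -/
theorem singular_pencil_zero_in_joint_numerical_range
    (n : ℕ) (A B : Matrix (Fin n) (Fin n) ℂ)
    (hsing : ∀ z : ℂ, ¬ IsUnit (A + z • B)) :
    ∃ x : Fin n → ℂ, x ≠ 0 ∧ star x ⬝ᵥ (A *ᵥ x) = 0 ∧ star x ⬝ᵥ (B *ᵥ x) = 0 := by
  obtain ⟨U, hU⟩ := exists_finrank_sup_map_lt_of_det_eq_zero A B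
    (det_map_C_add_X_smul_map_C_eq_zero A B hsing)
  exact exists_ne_zero_star_dotProduct_mulVec_eq_zero_of_finrank_lt A B U hU
end

section
/- Let A = diag(1, −1) and B = diag(2, −2) as 2×2 complex matrices. Then AB = BA, A*B = BA*, there exists a unit vector x with x*Ax = 0 and x*Bx = 0, yet the pencil A + λB is not singular: there exists λ₀ ∈ ℂ such that A + λ₀B is invertible. -/
open Matrix

/-- For `A = diag(1,-1)` and `B = diag(2,-2)` we have `AB = BA`, `A* B = B A*`,
`(0,0)` belongs to the joint numerical range of `(A,B)`, and yet the pencil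
`A + λ B` is not singular. -/
theorem example_joint_numerical_range_not_singular :
    let A : Matrix (Fin 2) (Fin 2) ℂ := Matrix.diagonal ![1, -1]
    let B : Matrix (Fin 2) (Fin 2) ℂ := Matrix.diagonal ![2, -2]
    A * B = B * A ∧ Aᴴ * B = B * Aᴴ ∧
    (∃ x : Fin 2 → ℂ, star x ⬝ᵥ x = 1 ∧ star x ⬝ᵥ (A *ᵥ x) = 0 ∧
      star x ⬝ᵥ (B *ᵥ x) = 0) ∧
    (∃ z : ℂ, IsUnit (A + z • B)) := by
  intro A B
  have h2 : ((Real.sqrt 2 : ℂ))⁻¹ * ((Real.sqrt 2 : ℂ))⁻¹ = 2⁻¹ := by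
    rw [← mul_inv, ← Complex.ofReal_mul,
      Real.mul_self_sqrt (by norm_num : (2:ℝ) ≥ 0).le]
    norm_num
  refine ⟨?_, ?_, ⟨![(Real.sqrt 2 : ℂ)⁻¹, (Real.sqrt 2 : ℂ)⁻¹], ?_, ?_, ?_⟩,
    0, ?_⟩
  · simp [A, B, diagonal_mul_diagonal, mul_comm]
  · simp [A, B, diagonal_conjTranspose, diagonal_mul_diagonal, mul_comm]
  · simp [dotProduct, Fin.sum_univ_two, Complex.star_def, map_inv₀,
      Complex.conj_ofReal, h2]
    norm_num
  · simp [A, dotProduct, mulVec, Fin.sum_univ_two, Matrix.diagonal, Complex.star_def,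
      map_inv₀, Complex.conj_ofReal]
  · simp [B, dotProduct, mulVec, Fin.sum_univ_two, Matrix.diagonal, Complex.star_def,
      map_inv₀, Complex.conj_ofReal]
  · rw [zero_smul, add_zero, Matrix.isUnit_iff_isUnit_det]
    simp [A, det_diagonal, Fin.prod_univ_two]
end

section
/- Let A and B be commuting n×n complex matrices. If every matrix A + λ₀B (λ₀ ∈ ℂ) is non-invertible, then ker A ∩ ker B ≠ {0}; i.e., A and B have a common nonzero kernel vector. -/
open Matrix Module

private lemma aux_pencil : ∀ (k : ℕ) (V : Type) [AddCommGroup V] [Module ℂ V]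
    [FiniteDimensional ℂ V], Module.finrank ℂ V = k →
    ∀ (f g : Module.End ℂ V), f * g = g * f →
    ∀ S : Set ℂ, S.Infinite → (∀ z ∈ S, ¬ IsUnit (f + z • g)) →
    ∃ x : V, x ≠ 0 ∧ f x = 0 ∧ g x = 0 := by
  intro k
  induction k using Nat.strong_induction_on with
  | _ k IH =>
    intro V _ _ _ hrank f g hcomm S hS hsing
    obtain ⟨z₀, hz₀⟩ := hS.nonempty
    set f' : Module.End ℂ V := f + z₀ • g with hf'
    have hcomm' : f' * g = g * f' := by
      simp only [hf', add_mul, mul_add, smul_mul_assoc, mul_smul_comm, hcomm]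
    have hcomm'app : ∀ x : V, f' (g x) = g (f' x) := by
      intro x
      exact congrArg (fun h : Module.End ℂ V => h x) hcomm'
    set K : Submodule ℂ V := LinearMap.ker f' with hKdef
    have hK : K ≠ ⊥ := by
      intro h
      exact hsing z₀ hz₀ ((LinearMap.isUnit_iff_ker_eq_bot _).2 h)
    have hgK : ∀ x ∈ K, g x ∈ K := by
      intro x hx
      simp only [hKdef, LinearMap.mem_ker] at hx ⊢
      rw [hcomm'app, hx, map_zero]
    set gK : K →ₗ[ℂ] K := g.restrict hgK with hgKdef
    by_cases hinj : Function.Injective gK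
    · -- quotient argument
      have hf'K : ∀ x ∈ K, f' x ∈ K := by
        intro x hx
        simp only [hKdef, LinearMap.mem_ker] at hx ⊢
        rw [hx, map_zero]
      have hfQle : K ≤ K.comap f' := fun x hx => hf'K x hx
      have hgQle : K ≤ K.comap g := fun x hx => hgK x hx
      set fQ : Module.End ℂ (V ⧸ K) := K.mapQ K f' hfQle with hfQdef
      set gQ : Module.End ℂ (V ⧸ K) := K.mapQ K g hgQle with hgQdef
      have hcommQ : fQ * gQ = gQ * fQ := by
        apply LinearMap.ext
        intro q
        induction q using Submodule.Quotient.mk_surjective K |>.forall.2 with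
        | _ x =>
          show fQ (gQ (Submodule.Quotient.mk x)) = gQ (fQ (Submodule.Quotient.mk x))
          simp only [hfQdef, hgQdef, Submodule.mapQ_apply]
          rw [hcomm'app]
      -- dimension drops
      have hKpos : 0 < Module.finrank ℂ K := by
        have : Nontrivial K := Submodule.nontrivial_iff_ne_bot.2 hK
        exact Module.finrank_pos
      have hdim : Module.finrank ℂ (V ⧸ K) < k := by
        have h1 := Submodule.finrank_quotient_add_finrank K
        omega
      -- quotient pencil singular on shifted set
      set S' : Set ℂ := (fun z => z - z₀) '' (S \ {z₀}) with hS'def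
      have hS' : S'.Infinite := by
        apply Set.Infinite.image
        · intro a _ b _ h
          simpa using h
        · exact hS.diff (Set.finite_singleton z₀)
      have hsingQ : ∀ z' ∈ S', ¬ IsUnit (fQ + z' • gQ) := by
        rintro z' ⟨z, hz, rfl⟩ hu
        have hzS : z ∈ S := hz.1
        have hzne : z - z₀ ≠ 0 := sub_ne_zero.2 (by simpa using hz.2)
        apply hsing z hzS
        rw [LinearMap.isUnit_iff_ker_eq_bot]
        rw [LinearMap.isUnit_iff_ker_eq_bot, LinearMap.ker_eq_bot] at hu
        rw [LinearMap.ker_eq_bot']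
        intro x hx
        have hx' : f' x + (z - z₀) • g x = 0 := by
          have : f' x + (z - z₀) • g x = f x + z • g x := by
            simp only [hf', LinearMap.add_apply, LinearMap.smul_apply, sub_smul]
            module
          rw [this]
          simpa using congrArg (fun h : Module.End ℂ V => h x) rfl ▸ hx
        have hmk : (fQ + (z - z₀) • gQ) (Submodule.Quotient.mk x) = 0 := by
          show fQ (Submodule.Quotient.mk x) + (z - z₀) • gQ (Submodule.Quotient.mk x) = 0
          simp only [hfQdef, hgQdef, Submodule.mapQ_apply]
          rw [← Submodule.Quotient.mk_smul, ← Submodule.Quotient.mk_add, hx']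
          exact Submodule.Quotient.mk_zero K
        have hxK : x ∈ K := by
          have h0 : (fQ + (z - z₀) • gQ) (Submodule.Quotient.mk x)
              = (fQ + (z - z₀) • gQ) 0 := by rw [map_zero]; exact hmk
          exact (Submodule.Quotient.mk_eq_zero K).1 (hu h0)
        have hf'x : f' x = 0 := hxK
        have hgx : g x = 0 := by
          have : (z - z₀) • g x = 0 := by
            rw [← hx', hf'x, zero_add]
          exact (smul_eq_zero.1 this).resolve_left hzne
        have : gK ⟨x, hxK⟩ = 0 := by
          apply Subtype.ext
          simp [hgKdef, LinearMap.restrict_apply, hgx]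
        have := hinj (by rw [this, map_zero] : gK ⟨x, hxK⟩ = gK 0)
        simpa using congrArg Subtype.val this
      obtain ⟨q, hq0, hfq, hgq⟩ := IH (Module.finrank ℂ (V ⧸ K)) hdim (V ⧸ K) rfl
        fQ gQ hcommQ S' hS' hsingQ
      obtain ⟨x, rfl⟩ := Submodule.Quotient.mk_surjective K q
      have hf'xK : f' x ∈ K := by
        have : fQ (Submodule.Quotient.mk x) = 0 := hfq
        rw [hfQdef, Submodule.mapQ_apply] at this
        exact (Submodule.Quotient.mk_eq_zero K).1 this
      have hgxK : g x ∈ K := by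
        have : gQ (Submodule.Quotient.mk x) = 0 := hgq
        rw [hgQdef, Submodule.mapQ_apply] at this
        exact (Submodule.Quotient.mk_eq_zero K).1 this
      refine ⟨f' x, ?_, ?_, ?_⟩
      · intro h
        apply hq0
        rw [Submodule.Quotient.mk_eq_zero]
        exact (LinearMap.mem_ker).2 h
      · -- f (f' x) = 0
        have hf'f'x : f' (f' x) = 0 := hf'xK
        have hgf'x : g (f' x) = 0 := by
          rw [← hcomm'app]
          exact hgxK
        have : f (f' x) = f' (f' x) - z₀ • g (f' x) := by
          simp [hf', sub_eq_iff_eq_add]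
        rw [this, hf'f'x, hgf'x, smul_zero, sub_zero]
      · rw [← hcomm'app]
        exact hgxK
    · -- gK not injective: common kernel vector inside K
      rw [← LinearMap.ker_eq_bot] at hinj
      obtain ⟨⟨x, hxK⟩, hker, hxne⟩ := Submodule.ne_bot_iff _ |>.1 hinj
      have hgx : g x = 0 := by
        have := congrArg Subtype.val (LinearMap.mem_ker.1 hker)
        simpa [hgKdef, LinearMap.restrict_apply] using this
      have hxne' : x ≠ 0 := by
        intro h
        exact hxne (Subtype.ext h)
      have hf'x : f' x = 0 := hxK
      refine ⟨x, hxne', ?_, hgx⟩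
      have : f x = f' x - z₀ • g x := by simp [hf', sub_eq_iff_eq_add]
      rw [this, hf'x, hgx, smul_zero, sub_zero]

/-- If `A` and `B` commute and the pencil `A + λ B` is singular, then `A` and `B`
have a common nonzero kernel vector. -/
theorem singular_pencil_common_kernel
    (n : ℕ) (A B : Matrix (Fin n) (Fin n) ℂ)
    (hcomm : A * B = B * A) (hsing : ∀ z : ℂ, ¬ IsUnit (A + z • B)) :
    ∃ x : Fin n → ℂ, x ≠ 0 ∧ A *ᵥ x = 0 ∧ B *ᵥ x = 0 := by
  classical
  set e : Matrix (Fin n) (Fin n) ℂ ≃ₐ[ℂ] ((Fin n → ℂ) →ₗ[ℂ] (Fin n → ℂ)) :=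
    Matrix.toLinAlgEquiv' with he
  have hc : (e A : Module.End ℂ (Fin n → ℂ)) * e B = e B * e A := by
    rw [← _root_.map_mul, ← _root_.map_mul, hcomm]
  have hs : ∀ z ∈ (Set.univ : Set ℂ),
      ¬ IsUnit ((e A : Module.End ℂ (Fin n → ℂ)) + z • e B) := by
    intro z _ hu
    apply hsing z
    have heq : (e A : Module.End ℂ (Fin n → ℂ)) + z • e B = e (A + z • B) := by
      rw [_root_.map_add, _root_.map_smul]
    rw [heq] at hu
    have := hu.map e.symm
    simpa using this
  obtain ⟨x, hx0, hfx, hgx⟩ := aux_pencil (Module.finrank ℂ (Fin n → ℂ)) (Fin n → ℂ)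
    rfl (e A) (e B) hc Set.univ Set.infinite_univ hs
  refine ⟨x, hx0, ?_, ?_⟩
  · simpa [he, Matrix.toLinAlgEquiv'_apply] using hfx
  · simpa [he, Matrix.toLinAlgEquiv'_apply] using hgx
end

section
/- Let A and B be commuting n×n complex matrices. Then the pencil A + λB is singular (A + λ₀B non-invertible for all λ₀ ∈ ℂ) if and only if A and B have a common nonzero kernel vector, or equivalently, if and only if the Koszul complex of (A,B) fails to be exact at the first stage. -/
open Matrix

/-- Two commuting endomorphisms of a nontrivial finite-dimensional complex vector
space have a common eigenvector. -/
lemma exists_common_eigenvector {V : Type*} [AddCommGroup V] [Module ℂ V]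
    [FiniteDimensional ℂ V] [Nontrivial V] (f g : Module.End ℂ V)
    (h : f ∘ₗ g = g ∘ₗ f) :
    ∃ (μ ν : ℂ) (x : V), x ≠ 0 ∧ f x = μ • x ∧ g x = ν • x := by
  obtain ⟨μ, hμ⟩ := Module.End.exists_eigenvalue f
  set E := f.eigenspace μ with hE
  have hmap : ∀ x ∈ E, g x ∈ E := by
    intro x hx
    rw [hE, Module.End.mem_eigenspace_iff] at hx ⊢
    have hfg : f (g x) = g (f x) := congrFun (congrArg DFunLike.coe h) x
    rw [hfg, hx]; exact g.map_smul μ x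
  have hEnt : Nontrivial E := Submodule.nontrivial_iff_ne_bot.2 hμ
  obtain ⟨ν, hν⟩ := Module.End.exists_eigenvalue (g.restrict hmap)
  obtain ⟨y, hy⟩ := hν.exists_hasEigenvector
  refine ⟨μ, ν, (y : V), ?_, ?_, ?_⟩
  · simpa [Submodule.coe_eq_zero] using hy.right
  · exact Module.End.mem_eigenspace_iff.mp y.2
  · have := congrArg (Subtype.val : E → V) hy.apply_eq_smul
    simpa [LinearMap.restrict_coe_apply] using this

set_option maxHeartbeats 1000000 in
/-- For commuting matrices `A`, `B`, the pencil `A + λ B` is singular if and only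
if `A` and `B` have a common nonzero kernel vector (failure of exactness of the
Koszul complex at the first stage). -/
theorem singular_pencil_iff_common_kernel
    (n : ℕ) (A B : Matrix (Fin n) (Fin n) ℂ) (hcomm : A * B = B * A) :
    (∀ z : ℂ, ¬ IsUnit (A + z • B)) ↔
      ∃ x : Fin n → ℂ, x ≠ 0 ∧ A *ᵥ x = 0 ∧ B *ᵥ x = 0 := by
  constructor
  · intro h
    by_contra hc
    -- For each z, produce eigenvalues μ, ν of A, B with ν ≠ 0 and μ + z ν = 0.
    have key : ∀ z : ℂ, ∃ μ ν : ℂ, ν ≠ 0 ∧ μ + z * ν = 0 ∧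
        Module.End.HasEigenvalue A.mulVecLin μ ∧ Module.End.HasEigenvalue B.mulVecLin ν := by
      intro z
      have hdet : (A + z • B).det = 0 := by
        by_contra hd
        exact h z ((Matrix.isUnit_iff_isUnit_det _).2 (isUnit_iff_ne_zero.2 hd))
      obtain ⟨v, hv0, hv⟩ := (Matrix.exists_mulVec_eq_zero_iff).2 hdet
      set K : Submodule ℂ (Fin n → ℂ) := LinearMap.ker (A + z • B).mulVecLin with hK
      have hvK : v ∈ K := by
        rw [hK, LinearMap.mem_ker, Matrix.mulVecLin_apply, hv]
      have hKnt : Nontrivial K :=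
        Submodule.nontrivial_iff_ne_bot.2 fun hbot => hv0 (by
          have := hbot ▸ hvK; simpa using this)
      have hAcomm : A * (A + z • B) = (A + z • B) * A := by
        rw [mul_add, add_mul, Matrix.mul_smul, Matrix.smul_mul, hcomm]
      have hBcomm : B * (A + z • B) = (A + z • B) * B := by
        rw [mul_add, add_mul, Matrix.mul_smul, Matrix.smul_mul, hcomm]
      have hAmap : ∀ x ∈ K, A.mulVecLin x ∈ K := by
        intro x hx
        rw [hK, LinearMap.mem_ker] at hx ⊢
        have : ((A + z • B) * A).mulVecLin x = 0 := by
          rw [← hAcomm, Matrix.mulVecLin_mul, LinearMap.comp_apply, hx, map_zero]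
        rwa [Matrix.mulVecLin_mul, LinearMap.comp_apply] at this
      have hBmap : ∀ x ∈ K, B.mulVecLin x ∈ K := by
        intro x hx
        rw [hK, LinearMap.mem_ker] at hx ⊢
        have : ((A + z • B) * B).mulVecLin x = 0 := by
          rw [← hBcomm, Matrix.mulVecLin_mul, LinearMap.comp_apply, hx, map_zero]
        rwa [Matrix.mulVecLin_mul, LinearMap.comp_apply] at this
      have hABlin : A.mulVecLin ∘ₗ B.mulVecLin = B.mulVecLin ∘ₗ A.mulVecLin := by
        rw [← Matrix.mulVecLin_mul, ← Matrix.mulVecLin_mul, hcomm]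
      have hrescomm : (A.mulVecLin.restrict hAmap) ∘ₗ (B.mulVecLin.restrict hBmap)
          = (B.mulVecLin.restrict hBmap) ∘ₗ (A.mulVecLin.restrict hAmap) := by
        refine LinearMap.ext fun x => Subtype.ext ?_
        rw [LinearMap.comp_apply, LinearMap.comp_apply, LinearMap.restrict_coe_apply,
          LinearMap.restrict_coe_apply, LinearMap.restrict_coe_apply,
          LinearMap.restrict_coe_apply]
        exact congrFun (congrArg DFunLike.coe hABlin) (x : Fin n → ℂ)
      obtain ⟨μ, ν, y, hy0, hfy, hgy⟩ :=
        exists_common_eigenvector (A.mulVecLin.restrict hAmap)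
          (B.mulVecLin.restrict hBmap) hrescomm
      have hx0 : (y : Fin n → ℂ) ≠ 0 := by simpa [Submodule.coe_eq_zero] using hy0
      have hAx : A *ᵥ (y : Fin n → ℂ) = μ • (y : Fin n → ℂ) := by
        have := congrArg (Subtype.val : K → (Fin n → ℂ)) hfy
        simpa [LinearMap.restrict_coe_apply, Matrix.mulVecLin_apply] using this
      have hBx : B *ᵥ (y : Fin n → ℂ) = ν • (y : Fin n → ℂ) := by
        have := congrArg (Subtype.val : K → (Fin n → ℂ)) hgy
        simpa [LinearMap.restrict_coe_apply, Matrix.mulVecLin_apply] using this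
      have hker : (A + z • B) *ᵥ (y : Fin n → ℂ) = 0 := y.2
      have hsum : (μ + z * ν) • (y : Fin n → ℂ) = 0 := by
        rw [add_smul, mul_smul, ← hAx, ← hBx, ← Matrix.smul_mulVec,
          ← Matrix.add_mulVec, hker]
      have hzero : μ + z * ν = 0 := by
        rcases smul_eq_zero.mp hsum with h' | h'
        · exact h'
        · exact absurd h' hx0
      have hν : ν ≠ 0 := by
        intro hν0
        have hμ0 : μ = 0 := by simpa [hν0] using hzero
        exact hc ⟨y, hx0, by rw [hAx, hμ0, zero_smul], by rw [hBx, hν0, zero_smul]⟩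
      refine ⟨μ, ν, hν, hzero, ?_, ?_⟩
      · exact Module.End.hasEigenvalue_of_hasEigenvector
          ⟨Module.End.mem_eigenspace_iff.2 (by rw [Matrix.mulVecLin_apply, hAx]), hx0⟩
      · exact Module.End.hasEigenvalue_of_hasEigenvector
          ⟨Module.End.mem_eigenspace_iff.2 (by rw [Matrix.mulVecLin_apply, hBx]), hx0⟩
    choose μ ν hν hsum hμA hνB using key
    have hinj : Function.Injective (fun z : ℂ => (μ z, ν z)) := by
      intro z w hzw
      have h1 : μ z = μ w := congrArg Prod.fst hzw
      have h2 : ν z = ν w := congrArg Prod.snd hzw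
      have hz := hsum z
      have hw := hsum w
      rw [h1, h2] at hz
      have : z * ν w = w * ν w := by linear_combination hz - hw
      exact mul_right_cancel₀ (hν w) this
    have hfin : Set.Finite (Set.range (fun z : ℂ => (μ z, ν z))) := by
      refine Set.Finite.subset
        ((Module.End.finite_hasEigenvalue A.mulVecLin).prod (Module.End.finite_hasEigenvalue B.mulVecLin)) ?_
      rintro p ⟨z, rfl⟩
      exact ⟨hμA z, hνB z⟩
    have : Set.Finite (Set.univ : Set ℂ) := by
      have himg : (fun z : ℂ => (μ z, ν z)) '' Set.univ = Set.range _ := Set.image_univ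
      exact Set.Finite.of_finite_image (himg ▸ hfin) hinj.injOn
    exact Set.infinite_univ this
  · rintro ⟨x, hx0, hAx, hBx⟩ z hU
    have hker : (A + z • B) *ᵥ x = 0 := by
      rw [Matrix.add_mulVec, Matrix.smul_mulVec, hAx, hBx, smul_zero, add_zero]
    have hdet : (A + z • B).det = 0 :=
      (Matrix.exists_mulVec_eq_zero_iff).1 ⟨x, hx0, hker⟩
    rw [Matrix.isUnit_iff_isUnit_det, hdet] at hU
    exact (not_isUnit_zero : ¬ IsUnit (0 : ℂ)) hU
end

section
/- Let A and B be commuting n×n complex matrices and (z₁, z₂) ∈ ℂ². Then the pencil (A − z₁I) + λ(B − z₂I) is singular if and only if A − z₁I and B − z₂I have a common nonzero kernel vector, i.e., there exists x ≠ 0 with Ax = z₁x and Bx = z₂x. -/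
open Matrix

private lemma common_kernel_of_commute :
    ∀ (k : ℕ) (V : Type) [AddCommGroup V] [Module ℂ V] [FiniteDimensional ℂ V],
      Module.finrank ℂ V = k →
      ∀ f g : V →ₗ[ℂ] V, (∀ v, f (g v) = g (f v)) →
        (∀ z : ℂ, ∃ x : V, x ≠ 0 ∧ f x + z • g x = 0) →
        ∃ x : V, x ≠ 0 ∧ f x = 0 ∧ g x = 0 := by
  intro k
  induction k using Nat.strong_induction_on with
  | _ k IH =>
    intro V _ _ _ hrank f g hcomm hsing
    by_cases hg : Function.Injective g
    · -- g is bijective; then g⁻¹ ∘ f has every complex number as eigenvalue: absurd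
      have hbij : Function.Bijective g :=
        ⟨hg, (LinearMap.injective_iff_surjective).mp hg⟩
      set e := LinearEquiv.ofBijective g hbij with he
      set h : Module.End ℂ V := e.symm.toLinearMap ∘ₗ f with hh
      have hall : ∀ μ : ℂ, h.HasEigenvalue μ := by
        intro μ
        obtain ⟨x, hx0, hx⟩ := hsing (-μ)
        have hfx : f x = μ • g x := by linear_combination (norm := module) hx
        have hgx : g (μ • x) = f x := by rw [_root_.map_smul, ← hfx]
        have hhx : h x = μ • x := by
          have h1 : e.symm (f x) = μ • x := by
            rw [← hgx]; exact e.symm_apply_apply _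
          simpa [hh] using h1
        exact Module.End.hasEigenvalue_of_hasEigenvector ⟨by
          rwa [Module.End.mem_eigenspace_iff], hx0⟩
      have hfin := Module.End.finite_hasEigenvalue h
      have : (Set.univ : Set ℂ).Finite := hfin.subset (fun μ _ => hall μ)
      exact absurd this (Set.infinite_univ)
    · -- W = ker g is nontrivial and f-invariant
      set W := LinearMap.ker g with hW
      have hWne : W ≠ ⊥ := by
        rwa [hW, Ne, LinearMap.ker_eq_bot]
      have hfW : ∀ x ∈ W, f x ∈ W := by
        intro x hx
        have : g x = 0 := hx
        simp [hW, LinearMap.mem_ker, ← hcomm, this]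
      set fW : W →ₗ[ℂ] W := f.restrict hfW with hfWdef
      by_cases hinj : Function.Injective fW
      · -- f restricted to ker g is injective: pass to the quotient
        have hfWsurj : Function.Surjective fW :=
          (LinearMap.injective_iff_surjective).mp hinj
        set Q := V ⧸ W with hQ
        have hWpos : 0 < Module.finrank ℂ W := by
          rw [Module.finrank_pos_iff]
          exact Submodule.nontrivial_iff_ne_bot.mpr hWne
        have hadd := Submodule.finrank_quotient_add_finrank W
        have hQQ : Module.finrank ℂ Q = Module.finrank ℂ (V ⧸ W) := rfl
        have hQlt : Module.finrank ℂ Q < k := by omega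
        have hfle : W ≤ W.comap f := fun x hx => hfW x hx
        have hgle : W ≤ W.comap g := by
          intro x hx
          have : g x = 0 := hx
          simp [Submodule.mem_comap, this]
        set fQ := Submodule.mapQ W W f hfle with hfQ
        set gQ := Submodule.mapQ W W g hgle with hgQ
        have hcommQ : ∀ v, fQ (gQ v) = gQ (fQ v) := by
          intro v
          obtain ⟨x, rfl⟩ := Submodule.Quotient.mk_surjective W v
          simp [hfQ, hgQ, Submodule.mapQ_apply, hcomm x]
        have hsingQ : ∀ z : ℂ, ∃ y : Q, y ≠ 0 ∧ fQ y + z • gQ y = 0 := by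
          intro z
          obtain ⟨x, hx0, hx⟩ := hsing z
          refine ⟨Submodule.Quotient.mk x, ?_, ?_⟩
          · intro hmk
            have hxW : x ∈ W := (Submodule.Quotient.mk_eq_zero W).mp hmk
            have hgx : g x = 0 := hxW
            have hfx : f x = 0 := by
              have := hx; rw [hgx, smul_zero, add_zero] at this; exact this
            have : fW ⟨x, hxW⟩ = 0 := by
              apply Subtype.ext; simpa [hfWdef, LinearMap.restrict_apply] using hfx
            have := hinj (a₁ := ⟨x, hxW⟩) (a₂ := 0) (by simpa using this)
            exact hx0 (by simpa using congrArg Subtype.val this)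
          · have : fQ (Submodule.Quotient.mk x) + z • gQ (Submodule.Quotient.mk x)
                = Submodule.Quotient.mk (p := W) (f x + z • g x) := by
              simp [hfQ, hgQ, Submodule.mapQ_apply, Submodule.Quotient.mk_add,
                Submodule.Quotient.mk_smul]
            rw [this, hx, Submodule.Quotient.mk_zero]
        obtain ⟨y, hy0, hfy, hgy⟩ :=
          IH (Module.finrank ℂ Q) hQlt Q rfl fQ gQ hcommQ hsingQ
        obtain ⟨x, rfl⟩ := Submodule.Quotient.mk_surjective W y
        have hxW : x ∉ W := fun hxW => hy0 ((Submodule.Quotient.mk_eq_zero W).mpr hxW)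
        have hfxW : f x ∈ W := by
          have h1 := hfy
          rw [hfQ, Submodule.mapQ_apply] at h1
          exact (Submodule.Quotient.mk_eq_zero W).mp h1
        have hgxW : g x ∈ W := by
          have h1 := hgy
          rw [hgQ, Submodule.mapQ_apply] at h1
          exact (Submodule.Quotient.mk_eq_zero W).mp h1
        obtain ⟨u, hu⟩ := hfWsurj ⟨f x, hfxW⟩
        have hu' : f (u : V) = f x := by
          have := congrArg Subtype.val hu
          simpa [hfWdef, LinearMap.restrict_apply] using this
        refine ⟨x - (u : V), ?_, ?_, ?_⟩
        · intro h0
          apply hxW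
          have : x = (u : V) := by linear_combination (norm := module) h0
          rw [this]; exact u.2
        · rw [map_sub, hu', sub_self]
        · have hgu : g (u : V) = 0 := u.2
          have hgy' : g (x - u) = g x := by rw [map_sub, hgu, sub_zero]
          have hfgx : f (g x) = 0 := by
            have hfxu : f (x - (u:V)) = 0 := by rw [map_sub, hu', sub_self]
            have h1 := hcomm (x - (u:V))
            rw [hfxu, map_zero, hgy'] at h1
            exact h1
          have h1 : fW ⟨g x, hgxW⟩ = 0 := by
            apply Subtype.ext; simpa [hfWdef, LinearMap.restrict_apply] using hfgx
          have h2 := hinj (a₁ := ⟨g x, hgxW⟩) (a₂ := 0) (by simpa using h1)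
          have : g x = 0 := by simpa using congrArg Subtype.val h2
          rw [hgy', this]
      · -- f is not injective on ker g: a common kernel vector inside ker g
        rw [injective_iff_map_eq_zero] at hinj
        push_neg at hinj
        obtain ⟨x, hfx, hx0⟩ := hinj
        refine ⟨(x : V), ?_, ?_, x.2⟩
        · intro h0; exact hx0 (Subtype.ext h0)
        · simpa [hfWdef, LinearMap.restrict_apply] using congrArg Subtype.val hfx

/-- For commuting matrices `A`, `B` and `(z₁, z₂) ∈ ℂ²`, the shifted pencil
`(A - z₁ I) + λ (B - z₂ I)` is singular if and only if there is a common
eigenvector `x ≠ 0` with `A x = z₁ x` and `B x = z₂ x`. -/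
theorem shifted_pencil_singular_iff_joint_eigenvector
    (n : ℕ) (A B : Matrix (Fin n) (Fin n) ℂ) (hcomm : A * B = B * A)
    (z₁ z₂ : ℂ) :
    (∀ z : ℂ, ¬ IsUnit ((A - z₁ • (1 : Matrix (Fin n) (Fin n) ℂ)) +
        z • (B - z₂ • (1 : Matrix (Fin n) (Fin n) ℂ)))) ↔
      ∃ x : Fin n → ℂ, x ≠ 0 ∧ A *ᵥ x = z₁ • x ∧ B *ᵥ x = z₂ • x := by
  set C := A - z₁ • (1 : Matrix (Fin n) (Fin n) ℂ) with hC
  set D := B - z₂ • (1 : Matrix (Fin n) (Fin n) ℂ) with hD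
  have hCD : C * D = D * C := by
    simp only [hC, hD, sub_mul, mul_sub, smul_mul_assoc, mul_smul_comm, one_mul, mul_one,
      hcomm]
    module
  have hCx : ∀ x : Fin n → ℂ, C *ᵥ x = A *ᵥ x - z₁ • x := by
    intro x
    simp [hC, sub_mulVec, smul_mulVec, one_mulVec]
  have hDx : ∀ x : Fin n → ℂ, D *ᵥ x = B *ᵥ x - z₂ • x := by
    intro x
    simp [hD, sub_mulVec, smul_mulVec, one_mulVec]
  constructor
  · intro hsing
    have hker : ∀ z : ℂ, ∃ x : Fin n → ℂ, x ≠ 0 ∧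
        C.mulVecLin x + z • D.mulVecLin x = 0 := by
      intro z
      have hdet : (C + z • D).det = 0 := by
        by_contra hne
        exact hsing z ((Matrix.isUnit_iff_isUnit_det _).mpr (isUnit_iff_ne_zero.mpr hne))
      obtain ⟨v, hv0, hv⟩ := (Matrix.exists_mulVec_eq_zero_iff).mpr hdet
      refine ⟨v, hv0, ?_⟩
      simpa [Matrix.add_mulVec, Matrix.smul_mulVec] using hv
    have hcomm' : ∀ v, C.mulVecLin (D.mulVecLin v) = D.mulVecLin (C.mulVecLin v) := by
      intro v
      simp [Matrix.mulVec_mulVec, hCD]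
    obtain ⟨x, hx0, hfx, hgx⟩ :=
      common_kernel_of_commute (Module.finrank ℂ (Fin n → ℂ)) (Fin n → ℂ) rfl
        C.mulVecLin D.mulVecLin hcomm' hker
    refine ⟨x, hx0, ?_, ?_⟩
    · have : C *ᵥ x = 0 := hfx
      rw [hCx] at this
      linear_combination (norm := module) this
    · have : D *ᵥ x = 0 := hgx
      rw [hDx] at this
      linear_combination (norm := module) this
  · rintro ⟨x, hx0, hA, hB⟩ z hunit
    have hCx0 : C *ᵥ x = 0 := by rw [hCx, hA, sub_self]
    have hDx0 : D *ᵥ x = 0 := by rw [hDx, hB, sub_self]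
    have hzero : (C + z • D) *ᵥ x = 0 := by
      simp [Matrix.add_mulVec, Matrix.smul_mulVec, hCx0, hDx0]
    have hdet : (C + z • D).det = 0 :=
      (Matrix.exists_mulVec_eq_zero_iff).mp ⟨x, hx0, hzero⟩
    have := (Matrix.isUnit_iff_isUnit_det _).mp hunit
    rw [hdet] at this
    exact this.ne_zero rfl
end

section
/- Let M : ℓ² → ℓ² be the unilateral shift, H = ℓ² ⊕ ℓ², T₁ = I ⊕ M, T₂ = M ⊕ I. If S₁, S₂ are bounded operators on H with T₁S₁ + T₂S₂ = 0, then there exists a bounded operator S on H with S₁ = −T₂S and S₂ = T₁S. Concretely, writing Sᵢ as 2×2 operator block matrices [Sᵢ₁₁ Sᵢ₁₂; Sᵢ₂₁ Sᵢ₂₂], the operator S = [S²₁₁ S²₁₂; −S¹₂₁ −S¹₂₂] works. -/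
local notation "ℓ²" => lp (fun _ : ℕ => ℂ) 2

/-- For the unilateral shift `M` on `ℓ²`, `T₁ = I ⊕ M`, `T₂ = M ⊕ I` on
`H = ℓ² ⊕ ℓ²`: if `T₁ S₁ + T₂ S₂ = 0` then there is a bounded operator `S`
with `S₁ = -T₂ S` and `S₂ = T₁ S`; concretely `S h = (π₁ (S₂ h), -π₂ (S₁ h))`
works. -/
theorem shift_pair_koszul_exact
    (M : ℓ² →L[ℂ] ℓ²)
    (hM : ∀ x : ℓ², (M x) 0 = 0 ∧ ∀ n : ℕ, (M x) (n + 1) = x n)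
    (S₁ S₂ : ℓ² × ℓ² →L[ℂ] ℓ² × ℓ²)
    (h : ((ContinuousLinearMap.id ℂ ℓ²).prodMap M) ∘L S₁ +
      (M.prodMap (ContinuousLinearMap.id ℂ ℓ²)) ∘L S₂ = 0) :
    ∃ S : ℓ² × ℓ² →L[ℂ] ℓ² × ℓ²,
      S = ((ContinuousLinearMap.fst ℂ ℓ² ℓ²) ∘L S₂).prod
            (-((ContinuousLinearMap.snd ℂ ℓ² ℓ²) ∘L S₁)) ∧
      S₁ = -((M.prodMap (ContinuousLinearMap.id ℂ ℓ²)) ∘L S) ∧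
      S₂ = ((ContinuousLinearMap.id ℂ ℓ²).prodMap M) ∘L S := by
  have key : ∀ v : ℓ² × ℓ²,
      (S₁ v).1 + M (S₂ v).1 = 0 ∧ M (S₁ v).2 + (S₂ v).2 = 0 := by
    intro v
    have := ContinuousLinearMap.ext_iff.mp h v
    rw [Prod.ext_iff] at this
    simpa using this
  refine ⟨_, rfl, ContinuousLinearMap.ext fun v => Prod.ext ?_ ?_,
    ContinuousLinearMap.ext fun v => Prod.ext ?_ ?_⟩ <;> simp
  · exact eq_neg_of_add_eq_zero_left (key v).1
  · exact (neg_eq_of_add_eq_zero_right (key v).2).symm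
end

section
/- Let M : ℓ² → ℓ² be the unilateral shift, H = ℓ² ⊕ ℓ², T₁ = I ⊕ M and T₂ = M ⊕ I. Then there is no unit vector h = (h₁, h₂) ∈ H with ⟨T₁h, h⟩ = 0 and ⟨T₂h, h⟩ = 0; i.e., (0,0) ∉ W(T₁, T₂). -/
/-!
The shift is an isometry with no eigenvectors, so Cauchy–Schwarz is strict for it:
`‖⟪M x, x⟫‖ < ‖x‖ ^ 2` for `x ≠ 0`. The two equations give `‖h₁‖ ^ 2 = ‖⟪M h₂, h₂⟫‖` and
`‖h₂‖ ^ 2 = ‖⟪M h₁, h₁⟫‖`, hence `‖h₁‖ ^ 2 ≤ ‖h₂‖ ^ 2 ≤ ‖h₁‖ ^ 2`, with a strict inequality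
unless `h₁ = h₂ = 0`, which contradicts `‖h₁‖ ^ 2 + ‖h₂‖ ^ 2 = 1`.
-/

local notation "ℓ²" => lp (fun _ : ℕ => ℂ) 2

open scoped InnerProductSpace

section StrictNumericalRadius

variable {𝕜 E : Type*} [RCLike 𝕜] [NormedAddCommGroup E] [InnerProductSpace 𝕜 E]

-- Equality in Cauchy–Schwarz for `⟪T x, x⟫` would force `x` to be a multiple of `T x`.
theorem norm_inner_apply_self_lt_sq {T : E → E} {x : E} (hx : x ≠ 0) (hTx : ‖T x‖ = ‖x‖)
    (hmul : ∀ r : 𝕜, x = r • T x → x = 0) : ‖⟪T x, x⟫_𝕜‖ < ‖x‖ ^ 2 := by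
  have hle : ‖⟪T x, x⟫_𝕜‖ ≤ ‖x‖ ^ 2 := by
    simpa [hTx, sq] using norm_inner_le_norm (𝕜 := 𝕜) (T x) x
  refine hle.lt_of_ne fun heq => hx ?_
  rcases ((norm_inner_eq_norm_tfae 𝕜 (T x) x).out 0 2).mp (by rw [heq, hTx, sq]) with
    hT0 | ⟨r, hr⟩
  · rwa [hT0, norm_zero, eq_comm, norm_eq_zero] at hTx
  · exact hmul r hr

theorem eq_zero_of_inner_self_add_inner_apply_eq_zero {T : E → E}
    (hT : ∀ x, x ≠ 0 → ‖⟪T x, x⟫_𝕜‖ < ‖x‖ ^ 2) {x y : E}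
    (hxy : ⟪x, x⟫_𝕜 + ⟪T y, y⟫_𝕜 = 0) (hyx : ⟪T x, x⟫_𝕜 + ⟪y, y⟫_𝕜 = 0) :
    x = 0 ∧ y = 0 := by
  have hle (z : E) : ‖⟪T z, z⟫_𝕜‖ ≤ ‖z‖ ^ 2 := by
    rcases eq_or_ne z 0 with rfl | hz
    · simp
    · exact (hT z hz).le
  have hnorm {u v : E} (h : ⟪u, u⟫_𝕜 + ⟪T v, v⟫_𝕜 = 0) : ‖u‖ ^ 2 = ‖⟪T v, v⟫_𝕜‖ := by
    rw [← norm_neg ⟪T v, v⟫_𝕜, ← eq_neg_of_add_eq_zero_left h, inner_self_eq_norm_sq_to_K]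
    simp
  have hx := hnorm hxy
  have hy := hnorm (by rw [add_comm]; exact hyx)
  constructor <;> by_contra hne
  · linarith [hT x hne, hle y]
  · linarith [hT y hne, hle x]

end StrictNumericalRadius

def IsUnilateralShift (M : ℓ² → ℓ²) : Prop :=
  ∀ x : ℓ², M x 0 = 0 ∧ ∀ n : ℕ, M x (n + 1) = x n

namespace IsUnilateralShift

variable {M : ℓ² → ℓ²} (hM : IsUnilateralShift M)
include hM

theorem inner_apply_apply (x : ℓ²) : ⟪M x, M x⟫_ℂ = ⟪x, x⟫_ℂ := by
  rw [lp.inner_eq_tsum, lp.inner_eq_tsum,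
    (lp.summable_inner (𝕜 := ℂ) (M x) (M x)).tsum_eq_zero_add]
  simp only [(hM x).1, (hM x).2, inner_zero_left, zero_add]

theorem norm_apply (x : ℓ²) : ‖M x‖ = ‖x‖ := by
  rw [norm_eq_sqrt_re_inner (𝕜 := ℂ), hM.inner_apply_apply, ← norm_eq_sqrt_re_inner]

theorem eq_zero_of_eq_smul_apply {x : ℓ²} {r : ℂ} (hr : x = r • M x) : x = 0 := by
  have hcoord (n : ℕ) : x n = r * M x n := by
    conv_lhs => rw [hr]
    rfl
  ext n
  induction n with
  | zero => simp [hcoord 0, (hM x).1]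
  | succ n ih => simp [hcoord (n + 1), (hM x).2 n, ih]

theorem norm_inner_apply_self_lt_sq {x : ℓ²} (hx : x ≠ 0) : ‖⟪M x, x⟫_ℂ‖ < ‖x‖ ^ 2 :=
  _root_.norm_inner_apply_self_lt_sq hx (hM.norm_apply x) fun _ => hM.eq_zero_of_eq_smul_apply

end IsUnilateralShift

open scoped ComplexInnerProductSpace in
/-- For the unilateral shift `M` on `ℓ²` and `T₁ = I ⊕ M`, `T₂ = M ⊕ I` on
`H = ℓ² ⊕ ℓ²`, there is no unit vector `h = (h₁, h₂)` with `⟨T₁ h, h⟩ = 0` and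
`⟨T₂ h, h⟩ = 0`; i.e. `(0,0) ∉ W(T₁, T₂)`. -/
theorem shift_pair_zero_not_in_joint_numerical_range
    (M : ℓ² →L[ℂ] ℓ²)
    (hM : ∀ x : ℓ², (M x) 0 = 0 ∧ ∀ n : ℕ, (M x) (n + 1) = x n) :
    ¬ ∃ h₁ h₂ : ℓ², (‖h₁‖ ^ 2 + ‖h₂‖ ^ 2 = 1) ∧
      ⟪h₁, h₁⟫ + ⟪M h₂, h₂⟫ = 0 ∧ ⟪M h₁, h₁⟫ + ⟪h₂, h₂⟫ = 0 := by
  rintro ⟨h₁, h₂, hunit, h₁₂, h₂₁⟩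
  have hshift : IsUnilateralShift M := hM
  obtain ⟨rfl, rfl⟩ := eq_zero_of_inner_self_add_inner_apply_eq_zero
    (fun _ => hshift.norm_inner_apply_self_lt_sq) h₁₂ h₂₁
  simp at hunit
end

section
/- For any nonzero x ∈ ℓ², the unilateral shift M satisfies |⟨Mx, x⟩| < ‖x‖². -/
local notation "ℓ²" => lp (fun _ : ℕ => ℂ) 2

/-!
The shift is an isometry, so Cauchy–Schwarz gives `‖⟪M x, x⟫‖ ≤ ‖M x‖ ‖x‖ = ‖x‖²`. Equality would
make `x = r • M x` for a scalar `r`; reading this coordinatewise from index `0` upward, with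
`(M x) 0 = 0` and `(M x) (n + 1) = x n`, shows that every coordinate of `x` vanishes.
-/

open scoped InnerProductSpace

section CauchySchwarz

variable {𝕜 E : Type*} [RCLike 𝕜] [NormedAddCommGroup E] [InnerProductSpace 𝕜 E]

theorem norm_inner_lt_sq_of_norm_eq {x y : E} (hnorm : ‖y‖ = ‖x‖)
    (hpar : ∀ r : 𝕜, x ≠ r • y) : ‖⟪y, x⟫_𝕜‖ < ‖x‖ ^ 2 := by
  have hy : y ≠ 0 := by
    rintro rfl
    exact hpar 0 (by rw [zero_smul, ← norm_eq_zero, ← hnorm, norm_zero])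
  have hne : ‖⟪y, x⟫_𝕜‖ ≠ ‖y‖ * ‖x‖ := by
    intro h
    obtain h | ⟨r, hr⟩ := ((norm_inner_eq_norm_tfae 𝕜 y x).out 0 2).1 h
    exacts [hy h, hpar r hr]
  calc ‖⟪y, x⟫_𝕜‖ < ‖y‖ * ‖x‖ := lt_of_le_of_ne (norm_inner_le_norm y x) hne
    _ = ‖x‖ ^ 2 := by rw [hnorm, sq]

end CauchySchwarz

theorem lp.norm_eq_of_shift {E : Type*} [NormedAddCommGroup E] {p : ENNReal} [Fact (1 ≤ p)]
    (hp : 0 < p.toReal) {x y : lp (fun _ : ℕ => E) p}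
    (h0 : y 0 = 0) (hsucc : ∀ n, y (n + 1) = x n) : ‖y‖ = ‖x‖ := by
  have hsum : Summable fun n => ‖y n‖ ^ p.toReal := (memℓp_gen_iff hp).1 y.2
  have hrpow : ‖y‖ ^ p.toReal = ‖x‖ ^ p.toReal := by
    rw [lp.norm_rpow_eq_tsum hp, lp.norm_rpow_eq_tsum hp, hsum.tsum_eq_zero_add]
    simp [h0, hsucc, Real.zero_rpow hp.ne']
  exact (Real.rpow_left_inj (norm_nonneg _) (norm_nonneg _) hp.ne').1 hrpow

theorem eq_zero_of_eq_smul_shift {R E : Type*} [Zero E] [SMulZeroClass R E] {x y : ℕ → E} {r : R}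
    (h0 : y 0 = 0) (hsucc : ∀ n, y (n + 1) = x n) (hxy : ∀ n, x n = r • y n) (n : ℕ) :
    x n = 0 := by
  induction n with
  | zero => rw [hxy, h0, smul_zero]
  | succ k ih => rw [hxy, hsucc, ih, smul_zero]

open scoped ComplexInnerProductSpace in
/-- For every nonzero `x ∈ ℓ²`, the unilateral shift `M` satisfies
`|⟨M x, x⟩| < ‖x‖²`. -/
theorem shift_numerical_range_open_disc
    (M : ℓ² →L[ℂ] ℓ²)
    (hM : ∀ x : ℓ², (M x) 0 = 0 ∧ ∀ n : ℕ, (M x) (n + 1) = x n)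
    (x : ℓ²) (hx : x ≠ 0) :
    ‖⟪M x, x⟫‖ < ‖x‖ ^ 2 := by
  obtain ⟨h0, hsucc⟩ := hM x
  refine norm_inner_lt_sq_of_norm_eq (lp.norm_eq_of_shift (by norm_num) h0 hsucc)
    fun r hr => hx (lp.ext (funext (eq_zero_of_eq_smul_shift (r := r) h0 hsucc fun n => ?_)))
  rw [← Pi.smul_apply, ← lp.coeFn_smul, ← hr]
end

section
/- Let M be the unilateral shift on ℓ², H = ℓ² ⊕ ℓ², T₁ = 3I ⊕ (M + 2I) and T₂ = (M + 2I) ⊕ 3I. Then T₁ and T₂ are invertible commuting operators, 2 ∈ σ(T₁), 2 ∈ σ(T₂), and T₁ − T₂ is not invertible, yet (T₁ − 2I) and (T₂ − 2I) satisfy: ker(T₁−2I) ∩ ker(T₂−2I) = {0}, range(T₁−2I) + range(T₂−2I) = H. -/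
local notation "ℓ²" => lp (fun _ : ℕ => ℂ) 2

set_option maxHeartbeats 1000000

private lemma exists_preimage_of_isUnit {E : Type*} [NormedAddCommGroup E] [NormedSpace ℂ E]
    {A : E →L[ℂ] E} (h : IsUnit A) (v : E) : ∃ x, A x = v := by
  obtain ⟨u, rfl⟩ := h
  refine ⟨(↑u⁻¹ : E →L[ℂ] E) v, ?_⟩
  rw [← ContinuousLinearMap.mul_apply, u.mul_inv, ContinuousLinearMap.one_apply]


/-- For the unilateral shift `M` on `ℓ²`, set `T₁ = 3I ⊕ (M + 2I)` and
`T₂ = (M + 2I) ⊕ 3I` on `H = ℓ² ⊕ ℓ²`. Then `T₁`, `T₂` are invertible and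
commute, `2 ∈ σ(T₁)`, `2 ∈ σ(T₂)`, `T₁ - T₂` is not invertible, and yet
`ker (T₁ - 2I) ∩ ker (T₂ - 2I) = {0}` and
`range (T₁ - 2I) + range (T₂ - 2I) = H`. -/
theorem shift_pair_taylor_spectrum_counterexample
    (M : ℓ² →L[ℂ] ℓ²)
    (hM : ∀ x : ℓ², (M x) 0 = 0 ∧ ∀ n : ℕ, (M x) (n + 1) = x n) :
    let I₂ : ℓ² →L[ℂ] ℓ² := ContinuousLinearMap.id ℂ ℓ²
    let T₁ : ℓ² × ℓ² →L[ℂ] ℓ² × ℓ² :=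
      ((3 : ℂ) • I₂).prodMap (M + (2 : ℂ) • I₂)
    let T₂ : ℓ² × ℓ² →L[ℂ] ℓ² × ℓ² :=
      (M + (2 : ℂ) • I₂).prodMap ((3 : ℂ) • I₂)
    IsUnit T₁ ∧ IsUnit T₂ ∧ T₁ ∘L T₂ = T₂ ∘L T₁ ∧
    (2 : ℂ) ∈ spectrum ℂ T₁ ∧ (2 : ℂ) ∈ spectrum ℂ T₂ ∧
    ¬ IsUnit (T₁ - T₂) ∧
    (∀ h : ℓ² × ℓ²,
      (T₁ - (2 : ℂ) • (1 : ℓ² × ℓ² →L[ℂ] ℓ² × ℓ²)) h = 0 →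
      (T₂ - (2 : ℂ) • (1 : ℓ² × ℓ² →L[ℂ] ℓ² × ℓ²)) h = 0 → h = 0) ∧
    (∀ h : ℓ² × ℓ², ∃ a b : ℓ² × ℓ²,
      h = (T₁ - (2 : ℂ) • (1 : ℓ² × ℓ² →L[ℂ] ℓ² × ℓ²)) a +
        (T₂ - (2 : ℂ) • (1 : ℓ² × ℓ² →L[ℂ] ℓ² × ℓ²)) b) := by
  intro I₂ T₁ T₂
  have hI : I₂ = 1 := rfl
  have happ₁ : ∀ z : ℓ² × ℓ², T₁ z = ((3:ℂ) • z.1, M z.2 + (2:ℂ) • z.2) := fun z => rfl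
  have happ₂ : ∀ z : ℓ² × ℓ², T₂ z = (M z.1 + (2:ℂ) • z.1, (3:ℂ) • z.2) := fun z => rfl
  have hp : (0:ℝ) < (2 : ENNReal).toReal := by norm_num
  -- M is an isometry
  have hnorm : ∀ x : ℓ², ‖M x‖ = ‖x‖ := by
    intro x
    have h1 := lp.norm_rpow_eq_tsum hp (M x)
    have h2 := lp.norm_rpow_eq_tsum hp x
    have hsum : Summable fun n => ‖(M x) n‖ ^ (2:ENNReal).toReal :=
      (lp.memℓp (M x)).summable hp
    have h3 := Summable.tsum_eq_zero_add hsum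
    simp only [(hM x).1, (hM x).2, norm_zero] at h3
    rw [h3] at h1
    have hz : (0:ℝ) ^ (2:ENNReal).toReal = 0 := by rw [Real.zero_rpow]; norm_num
    rw [hz, zero_add, ← h2] at h1
    have e2 : (2:ENNReal).toReal = ((2:ℕ):ℝ) := by norm_num
    rw [e2, Real.rpow_natCast, Real.rpow_natCast] at h1
    nlinarith [norm_nonneg (M x), norm_nonneg x, sq_nonneg (‖M x‖ - ‖x‖),
      sq_nonneg (‖M x‖ + ‖x‖)]
  have hMle : ‖M‖ ≤ 1 := M.opNorm_le_bound zero_le_one (fun x => by rw [hnorm, one_mul])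
  -- M + 2I is a unit
  have hU : IsUnit (M + (2:ℂ) • I₂) := by
    rw [hI]
    have h1 : ‖-((2:ℂ)⁻¹ • M)‖ < 1 := by
      rw [norm_neg, norm_smul (2⁻¹:ℂ) M]
      simp only [norm_inv, Complex.norm_ofNat]
      nlinarith [norm_nonneg M]
    have hu : IsUnit ((1 : ℓ² →L[ℂ] ℓ²) - -((2:ℂ)⁻¹ • M)) := (Units.oneSub _ h1).isUnit
    have hu2 : IsUnit (algebraMap ℂ (ℓ² →L[ℂ] ℓ²) 2) :=
      (isUnit_iff_ne_zero.mpr two_ne_zero).map (algebraMap ℂ (ℓ² →L[ℂ] ℓ²))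
    have h3 := hu2.mul hu
    convert h3 using 1
    rw [sub_neg_eq_add, ← Algebra.smul_def, smul_add, smul_smul]
    norm_num
    abel
  obtain ⟨u, hu⟩ := hU
  have huinv1 : ∀ y : ℓ², M ((↑u⁻¹ : ℓ² →L[ℂ] ℓ²) y) + (2:ℂ) • (↑u⁻¹ : ℓ² →L[ℂ] ℓ²) y = y := by
    intro y
    have : (M + (2:ℂ) • I₂) ((↑u⁻¹ : ℓ² →L[ℂ] ℓ²) y) = y := by
      rw [← hu, ← ContinuousLinearMap.mul_apply, u.mul_inv, ContinuousLinearMap.one_apply]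
    simpa [I₂] using this
  have huinv2 : ∀ y : ℓ², (↑u⁻¹ : ℓ² →L[ℂ] ℓ²) (M y) + (2:ℂ) • (↑u⁻¹ : ℓ² →L[ℂ] ℓ²) y = y := by
    intro y
    have h0 : (↑u⁻¹ : ℓ² →L[ℂ] ℓ²) ((M + (2:ℂ) • I₂) y) = y := by
      rw [← hu, ← ContinuousLinearMap.mul_apply, u.inv_mul, ContinuousLinearMap.one_apply]
    rw [show (M + (2:ℂ) • I₂) y = M y + (2:ℂ) • y from rfl, map_add, map_smul] at h0
    exact h0
  have key3 : ∀ x : ℓ², (3:ℂ) • ((3⁻¹:ℂ) • x) = x := by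
    intro x; rw [smul_smul]; norm_num
  have key3' : ∀ x : ℓ², (3⁻¹:ℂ) • ((3:ℂ) • x) = x := by
    intro x; rw [smul_smul]; norm_num
  -- T₁, T₂ are units
  have hUT₁ : IsUnit T₁ := by
    refine isUnit_iff_exists.mpr ⟨(((3:ℂ)⁻¹ • I₂).prodMap (↑u⁻¹ : ℓ² →L[ℂ] ℓ²)), ?_, ?_⟩ <;>
    · refine ContinuousLinearMap.ext fun z => Prod.ext ?_ ?_ <;>
        simp [T₁, ContinuousLinearMap.mul_apply, I₂, huinv1, huinv2, key3, key3']
  have hUT₂ : IsUnit T₂ := by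
    refine isUnit_iff_exists.mpr ⟨((↑u⁻¹ : ℓ² →L[ℂ] ℓ²).prodMap ((3:ℂ)⁻¹ • I₂)), ?_, ?_⟩ <;>
    · refine ContinuousLinearMap.ext fun z => Prod.ext ?_ ?_ <;>
        simp [T₂, ContinuousLinearMap.mul_apply, I₂, huinv1, huinv2, key3, key3']
  -- commuting
  have hcomm : T₁ ∘L T₂ = T₂ ∘L T₁ := by
    refine ContinuousLinearMap.ext fun z => ?_
    rw [ContinuousLinearMap.comp_apply, ContinuousLinearMap.comp_apply,
      happ₂, happ₁, happ₁, happ₂]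
    refine Prod.ext ?_ ?_ <;>
      simp [smul_add, map_smul, smul_smul, mul_comm]
  -- the distinguished vector e₀
  set e₀ : ℓ² := lp.single 2 0 1 with he₀
  have he₀0 : (e₀ : ∀ n, ℂ) 0 = 1 := lp.single_apply_self 2 0 1
  -- 2 ∈ spectrum T₁
  have hs₁ : (2:ℂ) ∈ spectrum ℂ T₁ := by
    rw [spectrum.mem_iff]
    intro hbad
    obtain ⟨w, hw⟩ := exists_preimage_of_isUnit hbad (0, e₀)
    have hw2 := congrArg Prod.snd hw
    rw [ContinuousLinearMap.sub_apply, Algebra.algebraMap_eq_smul_one] at hw2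
    rw [show ((2:ℂ) • (1 : ℓ² × ℓ² →L[ℂ] ℓ² × ℓ²)) w = (2:ℂ) • w from rfl, happ₁] at hw2
    simp only [Prod.smul_snd, Prod.snd_sub] at hw2
    have hw3 : -(M w.2) = e₀ := by rw [← hw2]; abel
    have := congrArg (fun f : ℓ² => (f : ∀ n, ℂ) 0) hw3
    simp only [he₀0, lp.coeFn_neg, Pi.neg_apply, (hM w.2).1, neg_zero] at this
    exact zero_ne_one this
  have hs₂ : (2:ℂ) ∈ spectrum ℂ T₂ := by
    rw [spectrum.mem_iff]
    intro hbad
    obtain ⟨w, hw⟩ := exists_preimage_of_isUnit hbad (e₀, 0)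
    have hw2 := congrArg Prod.fst hw
    rw [ContinuousLinearMap.sub_apply, Algebra.algebraMap_eq_smul_one] at hw2
    rw [show ((2:ℂ) • (1 : ℓ² × ℓ² →L[ℂ] ℓ² × ℓ²)) w = (2:ℂ) • w from rfl, happ₂] at hw2
    simp only [Prod.smul_fst, Prod.fst_sub] at hw2
    have hw3 : -(M w.1) = e₀ := by rw [← hw2]; abel
    have := congrArg (fun f : ℓ² => (f : ∀ n, ℂ) 0) hw3
    simp only [he₀0, lp.coeFn_neg, Pi.neg_apply, (hM w.1).1, neg_zero] at this
    exact zero_ne_one this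
  -- T₁ - T₂ is not a unit
  have hnotU : ¬ IsUnit (T₁ - T₂) := by
    intro hbad
    obtain ⟨w, hw⟩ := exists_preimage_of_isUnit hbad (e₀, 0)
    have hw2 := congrArg Prod.fst hw
    rw [ContinuousLinearMap.sub_apply, happ₁, happ₂] at hw2
    simp only [Prod.fst_sub] at hw2
    -- hw2 : 3 • w.1 - (M w.1 + 2 • w.1) = e₀
    have hw3 : w.1 - M w.1 = e₀ := by
      rw [← hw2]
      have h31 : (3:ℂ) • w.1 = w.1 + (2:ℂ) • w.1 := by module
      rw [h31]
      abel
    set a := w.1 with ha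
    have hval : ∀ n, (a : ∀ n, ℂ) n = 1 := by
      intro n
      induction n with
      | zero =>
        have := congrArg (fun f : ℓ² => (f : ∀ n, ℂ) 0) hw3
        simpa [lp.coeFn_sub, (hM a).1, he₀0] using this
      | succ k ih =>
        have := congrArg (fun f : ℓ² => (f : ∀ n, ℂ) (k+1)) hw3
        have hne : (e₀ : ∀ n, ℂ) (k+1) = 0 := lp.single_apply_ne 2 0 1 (by omega)
        simp only [lp.coeFn_sub, Pi.sub_apply, (hM a).2, hne] at this
        rw [sub_eq_zero] at this
        rw [this, ih]
    have hsum : Summable fun n => ‖(a : ∀ n, ℂ) n‖ ^ (2:ENNReal).toReal :=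
      (lp.memℓp a).summable hp
    have hten := hsum.tendsto_atTop_zero
    have hone : Filter.Tendsto (fun _ : ℕ => (1:ℝ)) Filter.atTop (nhds 0) := by
      convert hten using 2 with n
      rw [hval n]
      norm_num
    exact one_ne_zero (tendsto_nhds_unique tendsto_const_nhds hone)
  refine ⟨hUT₁, hUT₂, hcomm, hs₁, hs₂, hnotU, ?_, ?_⟩
  · intro h h1 h2
    have h1f := congrArg Prod.fst h1
    have h2s := congrArg Prod.snd h2
    rw [ContinuousLinearMap.sub_apply, happ₁,
      show ((2:ℂ) • (1 : ℓ² × ℓ² →L[ℂ] ℓ² × ℓ²)) h = (2:ℂ) • h from rfl] at h1f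
    rw [ContinuousLinearMap.sub_apply, happ₂,
      show ((2:ℂ) • (1 : ℓ² × ℓ² →L[ℂ] ℓ² × ℓ²)) h = (2:ℂ) • h from rfl] at h2s
    simp only [Prod.fst_sub, Prod.snd_sub, Prod.smul_fst, Prod.smul_snd, Prod.fst_zero,
      Prod.snd_zero] at h1f h2s
    have k1 : h.1 = 0 := by
      have e : (3:ℂ) • h.1 - (2:ℂ) • h.1 = h.1 := by rw [← sub_smul]; norm_num
      rwa [e] at h1f
    have k2 : h.2 = 0 := by
      have e : (3:ℂ) • h.2 - (2:ℂ) • h.2 = h.2 := by rw [← sub_smul]; norm_num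
      rwa [e] at h2s
    exact Prod.ext k1 k2
  · intro h
    refine ⟨(h.1, 0), (0, h.2), ?_⟩
    rw [ContinuousLinearMap.sub_apply, ContinuousLinearMap.sub_apply, happ₁, happ₂,
      show ((2:ℂ) • (1 : ℓ² × ℓ² →L[ℂ] ℓ² × ℓ²)) ((h.1, 0) : ℓ² × ℓ²) = (2:ℂ) • ((h.1, 0) : ℓ² × ℓ²) from rfl,
      show ((2:ℂ) • (1 : ℓ² × ℓ² →L[ℂ] ℓ² × ℓ²)) ((0, h.2) : ℓ² × ℓ²) = (2:ℂ) • ((0, h.2) : ℓ² × ℓ²) from rfl]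
    have k1 : (3:ℂ) • h.1 - (2:ℂ) • h.1 = h.1 := by rw [← sub_smul]; norm_num
    have k2 : (3:ℂ) • h.2 - (2:ℂ) • h.2 = h.2 := by rw [← sub_smul]; norm_num
    refine Prod.ext ?_ ?_ <;>
      simp [k1, k2]
end

section
/- Let δ ≥ 1 and let L_δ ∈ ℂ^{δ×(δ+1)} be the pair of bidiagonal matrices L^A (ones on the superdiagonal) and L^B (ones on the diagonal), so L_δ = L^A + λ L^B. If R ∈ ℂ^{δ_i×(δ_j+1)} with δ_i ≤ δ_j satisfies (L^B_i)ᵀ R (L^A_j)ᵀ = (L^A_i)ᵀ R (L^B_j)ᵀ (with the appropriate sized blocks), then R = 0. -/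
open Matrix

/-- The singular Kronecker block coefficient with ones on the superdiagonal:
`(L^A)_{s,t} = 1` iff `t = s + 1`. -/
def LA (d : ℕ) : Matrix (Fin d) (Fin (d + 1)) ℂ :=
  Matrix.of fun s t => if (t : ℕ) = (s : ℕ) + 1 then 1 else 0

/-- The singular Kronecker block coefficient with ones on the diagonal:
`(L^B)_{s,t} = 1` iff `t = s`. -/
def LB (d : ℕ) : Matrix (Fin d) (Fin (d + 1)) ℂ :=
  Matrix.of fun s t => if (t : ℕ) = (s : ℕ) then 1 else 0

private lemma sum_mul_ite {m : ℕ} (f : Fin m → ℂ) (c : ℕ) (hc : c < m) :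
    (∑ b : Fin m, f b * (if (b : ℕ) = c then 1 else 0)) = f ⟨c, hc⟩ := by
  rw [Fintype.sum_eq_single (⟨c, hc⟩ : Fin m)]
  · simp
  · intro b hb
    have : (b : ℕ) ≠ c := fun e => hb (Fin.ext e)
    simp [this]

private lemma sum_ite_mul {m : ℕ} (f : Fin m → ℂ) (c : ℕ) (hc : c < m) :
    (∑ a : Fin m, (if c = (a : ℕ) then (1:ℂ) else 0) * f a) = f ⟨c, hc⟩ := by
  rw [Fintype.sum_eq_single (⟨c, hc⟩ : Fin m)]
  · simp
  · intro b hb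
    have : c ≠ (b : ℕ) := fun e => hb (Fin.ext e.symm)
    simp [this]

private lemma sum_ite_mul_zero {m : ℕ} (f : Fin m → ℂ) (c : ℕ)
    (hc : ∀ a : Fin m, c ≠ (a : ℕ)) :
    (∑ a : Fin m, (if c = (a : ℕ) then (1:ℂ) else 0) * f a) = 0 := by
  apply Finset.sum_eq_zero
  intro a _
  simp [hc a]

/-- If `1 ≤ δᵢ ≤ δⱼ` and `R ∈ ℂ^{δᵢ × (δⱼ+1)}` satisfies
`(L^B_{δᵢ})ᵀ R (L^A_{δⱼ})ᵀ = (L^A_{δᵢ})ᵀ R (L^B_{δⱼ})ᵀ`, then `R = 0`. -/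
theorem kronecker_block_intertwiner_zero
    (di dj : ℕ) (hdi : 1 ≤ di) (hij : di ≤ dj)
    (R : Matrix (Fin di) (Fin (dj + 1)) ℂ)
    (h : (LB di)ᵀ * R * (LA dj)ᵀ = (LA di)ᵀ * R * (LB dj)ᵀ) :
    R = 0 := by
  obtain ⟨n, rfl⟩ : ∃ n, di = n + 1 := ⟨di - 1, (Nat.succ_pred_eq_of_pos hdi).symm⟩
  have key : ∀ (s : Fin (n + 2)) (t : Fin dj),
      (∑ a : Fin (n + 1), (if (s : ℕ) = (a : ℕ) then (1:ℂ) else 0) * R a ⟨(t:ℕ)+1, by omega⟩)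
      = ∑ a : Fin (n + 1), (if (s : ℕ) = (a : ℕ) + 1 then (1:ℂ) else 0) * R a ⟨(t:ℕ), by omega⟩ := by
    intro s t
    have H := congrFun (congrFun h s) t
    simp only [Matrix.mul_apply, Matrix.transpose_apply, LA, LB, Matrix.of_apply] at H
    rw [sum_mul_ite (fun b => ∑ a : Fin (n+1),
        (if (s : ℕ) = (a : ℕ) then (1:ℂ) else 0) * R a b) ((t:ℕ)+1) (by omega),
      sum_mul_ite (fun b => ∑ a : Fin (n+1),
        (if (s : ℕ) = (a : ℕ) + 1 then (1:ℂ) else 0) * R a b) ((t:ℕ)) (by omega)] at H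
    exact H
  -- boundary condition at s = 0 : first row vanishes in columns ≥ 1
  have hA : ∀ t : Fin dj, R ⟨0, by omega⟩ ⟨(t:ℕ)+1, by omega⟩ = 0 := by
    intro t
    have K := key ⟨0, by omega⟩ t
    simp only [Fin.val_mk] at K
    rw [sum_ite_mul (fun a => R a ⟨(t:ℕ)+1, by omega⟩) 0 (by omega)] at K
    simpa using K
  -- boundary condition at s = n+1 : last row vanishes in columns < dj
  have hB : ∀ t : Fin dj, R ⟨n, by omega⟩ ⟨(t:ℕ), by omega⟩ = 0 := by
    intro t
    have K := key ⟨n+1, by omega⟩ t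
    simp only [Fin.val_mk] at K
    rw [sum_ite_mul_zero _ (n+1) (by intro a; have := a.isLt; omega)] at K
    have K2 : (∑ a : Fin (n+1), (if n+1 = (a : ℕ) + 1 then (1:ℂ) else 0) * R a ⟨(t:ℕ), by omega⟩)
        = ∑ a : Fin (n+1), (if n = (a : ℕ) then (1:ℂ) else 0) * R a ⟨(t:ℕ), by omega⟩ := by
      apply Finset.sum_congr rfl
      intro x _
      simp only [add_left_inj]
    rw [K2, sum_ite_mul (fun a => R a ⟨(t:ℕ), by omega⟩) n (by omega)] at K
    exact K.symm
  -- the recurrence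
  have hC : ∀ (a b : ℕ) (ha : a + 1 < n + 1) (hb : b + 1 < dj + 1),
      R ⟨a + 1, by omega⟩ ⟨b + 1, by omega⟩ = R ⟨a, by omega⟩ ⟨b, by omega⟩ := by
    intro a b ha hb
    have K := key ⟨a+1, by omega⟩ ⟨b, by omega⟩
    simp only [Fin.val_mk] at K
    rw [sum_ite_mul (fun x => R x ⟨b+1, by omega⟩) (a+1) (by omega)] at K
    have K2 : (∑ x : Fin (n+1), (if a+1 = (x : ℕ) + 1 then (1:ℂ) else 0) * R x ⟨b, by omega⟩)
        = ∑ x : Fin (n+1), (if a = (x : ℕ) then (1:ℂ) else 0) * R x ⟨b, by omega⟩ := by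
      apply Finset.sum_congr rfl
      intro x _
      simp only [add_left_inj]
    rw [K2, sum_ite_mul (fun x => R x ⟨b, by omega⟩) a (by omega)] at K
    exact K
  -- shifting along diagonals
  have shift : ∀ (k a b : ℕ) (ha : a + k < n + 1) (hb : b + k < dj + 1),
      R ⟨a + k, ha⟩ ⟨b + k, hb⟩ = R ⟨a, by omega⟩ ⟨b, by omega⟩ := by
    intro k
    induction k with
    | zero => intro a b ha hb; rfl
    | succ k ih =>
      intro a b ha hb
      have h1 : R ⟨a + (k+1), ha⟩ ⟨b + (k+1), hb⟩
          = R ⟨(a+k)+1, by omega⟩ ⟨(b+k)+1, by omega⟩ := rfl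
      rw [h1, hC (a+k) (b+k) (by omega) (by omega)]
      exact ih a b (by omega) (by omega)
  ext a b
  simp only [Matrix.zero_apply]
  rcases le_or_gt (b : ℕ) (a : ℕ) with hba | hab
  · -- go up the diagonal to the last row
    have ha : (a : ℕ) + (n - (a:ℕ)) < n + 1 := by have := a.isLt; omega
    have hb : (b : ℕ) + (n - (a:ℕ)) < dj + 1 := by have := a.isLt; omega
    have S := shift (n - (a:ℕ)) a b ha hb
    have e : R ⟨(a:ℕ) + (n - (a:ℕ)), ha⟩ ⟨(b:ℕ) + (n - (a:ℕ)), hb⟩ = 0 := by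
      have hlt : (b:ℕ) + (n - (a:ℕ)) < dj := by have := a.isLt; omega
      have hb0 := hB ⟨(b:ℕ) + (n - (a:ℕ)), hlt⟩
      have h1 : (⟨(a:ℕ) + (n - (a:ℕ)), ha⟩ : Fin (n+1)) = ⟨n, by omega⟩ :=
        Fin.ext (by simp only [Fin.val_mk]; have := a.isLt; omega)
      rw [h1]
      exact hb0
    rw [e] at S
    exact S.symm
  · -- go down the diagonal to the first row
    have ha : 0 + (a:ℕ) < n + 1 := by have := a.isLt; omega
    have hb : ((b:ℕ) - (a:ℕ)) + (a:ℕ) < dj + 1 := by have := b.isLt; omega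
    have S := shift (a:ℕ) 0 ((b:ℕ) - (a:ℕ)) ha hb
    have e : R ⟨0, by omega⟩ ⟨(b:ℕ) - (a:ℕ), by omega⟩ = 0 := by
      have hlt : (b:ℕ) - (a:ℕ) - 1 < dj := by have := b.isLt; omega
      have ha0 := hA ⟨(b:ℕ) - (a:ℕ) - 1, hlt⟩
      have h1 : (⟨((b:ℕ) - (a:ℕ) - 1) + 1, by omega⟩ : Fin (dj+1))
          = ⟨(b:ℕ) - (a:ℕ), by omega⟩ := Fin.ext (by simp only [Fin.val_mk]; omega)
      rwa [h1] at ha0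
    rw [e] at S
    have h2 : R ⟨0 + (a:ℕ), ha⟩ ⟨((b:ℕ) - (a:ℕ)) + (a:ℕ), hb⟩ = R a b := by
      congr 1 <;> exact Fin.ext (by simp only [Fin.val_mk]; omega)
    exact h2.symm.trans S
end

section
/- Let A, B be commuting n×n complex matrices. For (z₁, z₂) ∈ ℂ², if there is no common eigenvector of A and B with eigenvalues z₁ and z₂ respectively, then there exists λ₀ ∈ ℂ such that (A − z₁I) + λ₀(B − z₂I) is invertible. -/
open Matrix Module

lemma aux_common_kernel :
    ∀ (m : ℕ) (V : Type) [AddCommGroup V] [Module ℂ V] [FiniteDimensional ℂ V],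
      Module.finrank ℂ V ≤ m → ∀ f g : Module.End ℂ V, f * g = g * f →
      (∀ c : ℂ, ¬ IsUnit (f + c • g)) → ∃ x : V, x ≠ 0 ∧ f x = 0 ∧ g x = 0 := by
  intro m
  induction m with
  | zero =>
    intro V _ _ _ hr f g hcomm hsing
    exfalso
    have : Subsingleton V := by
      rw [← Module.finrank_zero_iff (R := ℂ)]; omega
    exact hsing 0 (by
      have : f + (0:ℂ) • g = 1 := Subsingleton.elim _ _
      rw [this]; exact isUnit_one)
  | succ m ih =>
    intro V _ _ _ hr f g hcomm hsing
    set K := LinearMap.ker g with hKdef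
    have hfK : ∀ x ∈ K, f x ∈ K := by
      intro x hx
      have : g (f x) = f (g x) := by
        have := congrArg (fun h : Module.End ℂ V => h x) hcomm
        simpa using this.symm
      simp only [hKdef, LinearMap.mem_ker] at hx ⊢
      rw [this, hx, map_zero]
    by_cases hK : K = ⊥
    · -- g injective hence a unit
      exfalso
      have hg : IsUnit g := (LinearMap.isUnit_iff_ker_eq_bot g).mpr hK
      obtain ⟨u, hu⟩ := hg
      set h := f * (↑u⁻¹ : Module.End ℂ V) with hh
      have key : ∀ c : ℂ, ¬ IsUnit (h + c • 1) := by
        intro c hc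
        apply hsing c
        have : (h + c • 1) * g = f + c • g := by
          rw [add_mul, hh, mul_assoc, ← hu, Units.inv_mul, mul_one, smul_mul_assoc, one_mul, hu]
        rw [← this]
        exact hc.mul ⟨u, hu⟩
      have hev : ∀ μ : ℂ, h.HasEigenvalue μ := by
        intro μ
        rw [Module.End.hasEigenvalue_iff_mem_spectrum]
        rw [spectrum.mem_iff]
        intro hun
        apply key (-μ)
        have : algebraMap ℂ (Module.End ℂ V) μ - h = -(h + (-μ) • 1) := by
          simp only [Algebra.algebraMap_eq_smul_one, neg_add, neg_smul, neg_neg]; abel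
        rw [this] at hun
        exact (IsUnit.neg_iff _).mp hun
      have hfin : Set.Finite (setOf h.HasEigenvalue) := h.finite_hasEigenvalue
      exact Set.infinite_univ (hfin.subset fun μ _ => hev μ)
    · -- K ≠ ⊥
      set f' : K →ₗ[ℂ] K := f.restrict hfK with hf'
      by_cases hinj : Function.Injective f'
      · -- pass to quotient
        exfalso
        have hgK : ∀ x ∈ K, g x ∈ K := by
          intro x hx; simp only [hKdef, LinearMap.mem_ker] at hx ⊢; rw [hx, map_zero]
        set fQ := K.mapQ K f hfK with hfQ
        set gQ := K.mapQ K g hgK with hgQ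
        have hcommQ : fQ * gQ = gQ * fQ := by
          apply LinearMap.ext
          intro y
          obtain ⟨x, rfl⟩ := K.mkQ_surjective y
          have hc' := congrArg (fun h : Module.End ℂ V => h x) hcomm
          simp only [Module.End.mul_apply] at hc' ⊢
          show K.mapQ K f hfK ((K.mapQ K g hgK) (K.mkQ x)) = K.mapQ K g hgK ((K.mapQ K f hfK) (K.mkQ x))
          rw [Submodule.mkQ_apply, Submodule.mapQ_apply, Submodule.mapQ_apply, Submodule.mapQ_apply,
            Submodule.mapQ_apply, hc']
        have hrQ : Module.finrank ℂ (V ⧸ K) ≤ m := by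
          have h1 := K.finrank_quotient_add_finrank
          have h2 : 0 < Module.finrank ℂ K := by
            obtain ⟨b, hb, hb0⟩ := Submodule.exists_mem_ne_zero_of_ne_bot hK
            exact Module.finrank_pos_iff_exists_ne_zero.mpr
              ⟨⟨b, hb⟩, by simpa using hb0⟩
          omega
        have hsingQ : ∀ c : ℂ, ¬ IsUnit (fQ + c • gQ) := by
          intro c hc
          apply hsing c
          rw [LinearMap.isUnit_iff_ker_eq_bot] at hc ⊢
          rw [LinearMap.ker_eq_bot] at hc ⊢
          intro x y hxy
          -- reduce to injectivity
          have hx0 : ∀ z : V, (f + c • g) z = 0 → z = 0 := by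
            intro z hz
            have hz' : f z + c • g z = 0 := by simpa using hz
            have hz1 : (fQ + c • gQ) (K.mkQ z) = 0 := by
              simp only [LinearMap.add_apply, LinearMap.smul_apply,
                hfQ, hgQ, Submodule.mkQ_apply, Submodule.mapQ_apply]
              rw [← Submodule.Quotient.mk_smul, ← Submodule.Quotient.mk_add, hz',
                Submodule.Quotient.mk_zero]
            have h0 : K.mkQ z = 0 := hc (by rw [hz1, map_zero])
            have hzK : z ∈ K := by
              rwa [Submodule.mkQ_apply, Submodule.Quotient.mk_eq_zero] at h0
            have hgz : g z = 0 := LinearMap.mem_ker.mp (hKdef ▸ hzK)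
            have hfz : f z = 0 := by rwa [hgz, smul_zero, add_zero] at hz'
            have hz2 : f' ⟨z, hzK⟩ = 0 := by
              apply Subtype.ext
              simpa [hf', LinearMap.restrict_apply] using hfz
            have := hinj (a₁ := ⟨z, hzK⟩) (a₂ := 0) (by simpa using hz2)
            simpa using congrArg Subtype.val this
          have : (f + c • g) (x - y) = 0 := by rw [map_sub, hxy, sub_self]
          exact sub_eq_zero.mp (hx0 _ this)
        obtain ⟨y, hy0, hfy, hgy⟩ := ih (V ⧸ K) hrQ fQ gQ hcommQ hsingQ
        obtain ⟨x, rfl⟩ := K.mkQ_surjective y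
        have hxK : x ∉ K := fun hx => hy0 (by simpa [Submodule.Quotient.mk_eq_zero] using hx)
        have hfxK : f x ∈ K := by
          have : K.mkQ (f x) = 0 := by
            simpa [hfQ, Submodule.mapQ_apply] using hfy
          simpa [Submodule.Quotient.mk_eq_zero] using this
        have hgxK : g x ∈ K := by
          have : K.mkQ (g x) = 0 := by
            simpa [hgQ, Submodule.mapQ_apply] using hgy
          simpa [Submodule.Quotient.mk_eq_zero] using this
        have hfgx : f (g x) = 0 := by
          have h1 : g (f x) = 0 := LinearMap.mem_ker.mp (hKdef ▸ hfxK)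
          have := congrArg (fun h : Module.End ℂ V => h x) hcomm
          simp only [Module.End.mul_apply] at this
          rw [this, h1]
        have : f' ⟨g x, hgxK⟩ = 0 := by
          apply Subtype.ext; simpa [hf', LinearMap.restrict_apply] using hfgx
        have hgx0 : g x = 0 := by
          have := hinj (a₁ := ⟨g x, hgxK⟩) (a₂ := 0) (by simpa using this)
          simpa using congrArg Subtype.val this
        exact hxK (by rw [hKdef]; exact LinearMap.mem_ker.mpr hgx0)
      · -- f' not injective: common kernel vector
        rw [← LinearMap.ker_eq_bot] at hinj
        obtain ⟨b, hb, hb0⟩ := Submodule.exists_mem_ne_zero_of_ne_bot hinj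
        refine ⟨(b : V), by simpa using hb0, ?_, LinearMap.mem_ker.mp (hKdef ▸ b.2)⟩
        have : (f' b : V) = 0 := by rw [LinearMap.mem_ker.mp hb]; rfl
        simpa [hf', LinearMap.restrict_apply] using this

/-- For commuting matrices `A`, `B`: if there is no common eigenvector of `A`
and `B` with eigenvalues `z₁`, `z₂`, then some member `(A - z₁ I) + λ₀ (B - z₂ I)`
of the shifted pencil is invertible. -/
theorem no_joint_eigenvector_pencil_regular
    (n : ℕ) (A B : Matrix (Fin n) (Fin n) ℂ) (hcomm : A * B = B * A)
    (z₁ z₂ : ℂ)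
    (h : ¬ ∃ x : Fin n → ℂ, x ≠ 0 ∧ A *ᵥ x = z₁ • x ∧ B *ᵥ x = z₂ • x) :
    ∃ l₀ : ℂ, IsUnit ((A - z₁ • (1 : Matrix (Fin n) (Fin n) ℂ)) +
      l₀ • (B - z₂ • (1 : Matrix (Fin n) (Fin n) ℂ))) := by
  by_contra hcon
  push_neg at hcon
  set A' := A - z₁ • (1 : Matrix (Fin n) (Fin n) ℂ) with hA'
  set B' := B - z₂ • (1 : Matrix (Fin n) (Fin n) ℂ) with hB'
  have hcomm' : A' * B' = B' * A' := by
    simp only [hA', hB', sub_mul, mul_sub, hcomm, Matrix.smul_mul, Matrix.mul_smul,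
      Matrix.one_mul, Matrix.mul_one, smul_smul, mul_comm z₁ z₂]
    abel
  set e := (Matrix.toLinAlgEquiv' : Matrix (Fin n) (Fin n) ℂ ≃ₐ[ℂ] _) with he
  have hsing : ∀ c : ℂ, ¬ IsUnit (e A' + c • e B') := by
    intro c hc
    apply hcon c
    have : e A' + c • e B' = e (A' + c • B') := by
      rw [map_add, _root_.map_smul]
    rw [this] at hc
    have h2 : IsUnit (e.symm (e (A' + c • B'))) := hc.map e.symm.toRingEquiv.toRingHom
    rwa [AlgEquiv.symm_apply_apply] at h2
  obtain ⟨x, hx0, hfx, hgx⟩ := aux_common_kernel (Module.finrank ℂ (Fin n → ℂ))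
    (Fin n → ℂ) le_rfl (e A') (e B') (by rw [← _root_.map_mul, ← _root_.map_mul, hcomm']) hsing
  apply h
  refine ⟨x, hx0, ?_, ?_⟩
  · have : A' *ᵥ x = 0 := hfx
    rw [hA', Matrix.sub_mulVec, Matrix.smul_mulVec, Matrix.one_mulVec] at this
    linear_combination (norm := module) this
  · have : B' *ᵥ x = 0 := hgx
    rw [hB', Matrix.sub_mulVec, Matrix.smul_mulVec, Matrix.one_mulVec] at this
    linear_combination (norm := module) this
end
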